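/- No quadrilateral inscribed in a convex pentagon can intersect the interiors of all five corner triangles T_0,…,T_4 of the pentagon. -/

import Mathlib

/-!
For the corner at `v i`, let `h i = cornerCap (v (i-1)) (v (i+1)) (v i)` be the affine function
that vanishes on the line through the midpoints of the two edges at `v i` (a line parallel to the
diagonal `v (i-1) v (i+1)`) and equals `1/2` at `v i`. Convexity forces the diagonal to separate
`v i` from the two remaining vertices, so `h i ≤ -1/2` at every vertex other than `v i`; hence
`h i + h j ≤ 0` on the pentagon for `i ≠ j`, and the caps `{h i > 0}` are pairwise disjoint inside
the pentagon. The interior of `T i` lies in the `i`-th cap, and a half-plane meeting the hull of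
`u` contains some `u a`; five disjoint caps cannot each contain one of four points.

The separation by the diagonal comes from the edges: an edge lies in the frontier, so a supporting
line shows that the other vertices lie strictly on one side of it, and two adjacent edges see every
vertex off both of them on the same side.
-/

open Set

local notation "ℝ²" => Fin 2 → ℝ

noncomputable def det2 : ℝ² →ₗ[ℝ] ℝ² →ₗ[ℝ] ℝ :=
  LinearMap.mk₂ ℝ (fun u w => u 0 * w 1 - u 1 * w 0)
    (fun _ _ _ => by simp only [Pi.add_apply]; ring)
    (fun _ _ _ => by simp only [Pi.smul_apply, smul_eq_mul]; ring)
    (fun _ _ _ => by simp only [Pi.add_apply]; ring)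
    (fun _ _ _ => by simp only [Pi.smul_apply, smul_eq_mul]; ring)

lemma det2_apply (u w : ℝ²) : det2 u w = u 0 * w 1 - u 1 * w 0 := rfl

noncomputable def orient (a b : ℝ²) : ℝ² →ᵃ[ℝ] ℝ where
  toFun x := det2 (b - a) (x - a)
  linear := det2 (b - a)
  map_vadd' x w := by simp only [vadd_eq_add, add_sub_assoc, map_add]

lemma orient_apply (a b x : ℝ²) : orient a b x = det2 (b - a) (x - a) := rfl

lemma orient_rotate (a b c : ℝ²) : orient a b c = orient b c a := by
  simp only [orient_apply, det2_apply, Pi.sub_apply]; ring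

lemma orient_swap (a b c : ℝ²) : orient a c b = -orient a b c := by
  simp only [orient_apply, det2_apply, Pi.sub_apply]; ring

lemma orient_apply_left (a b : ℝ²) : orient a b a = 0 := by
  simp [orient_apply]

lemma orient_apply_right (a b : ℝ²) : orient a b b = 0 := by
  simp only [orient_apply, det2_apply, Pi.sub_apply]; ring

lemma exists_eq_smul_of_det2_eq_zero {w y : ℝ²} (hw : w ≠ 0) (h : det2 w y = 0) :
    ∃ t : ℝ, y = t • w := by
  rw [det2_apply] at h
  by_cases h0 : w 0 = 0
  · have h1 : w 1 ≠ 0 := fun h1 => hw (funext fun i => by fin_cases i <;> simp [h0, h1])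
    refine ⟨y 1 / w 1, funext fun i => ?_⟩
    fin_cases i <;> simp only [Fin.zero_eta, Fin.mk_one, Pi.smul_apply, smul_eq_mul] <;> field_simp
    · linear_combination -h
  · refine ⟨y 0 / w 0, funext fun i => ?_⟩
    fin_cases i <;> simp only [Fin.zero_eta, Fin.mk_one, Pi.smul_apply, smul_eq_mul] <;> field_simp
    linear_combination h

lemma eq_smul_det2_of_apply_eq_zero {f : ℝ² →ₗ[ℝ] ℝ} {w : ℝ²} (hw : w ≠ 0) (hf : f w = 0) :
    ∃ μ : ℝ, f = μ • det2 w := by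
  obtain ⟨p, q, hpq⟩ : ∃ p q : ℝ, ∀ y : ℝ², f y = p * y 0 + q * y 1 :=
    ⟨_, _, fun y => by
      rw [f.pi_apply_eq_sum_univ, Fin.sum_univ_two, smul_eq_mul, smul_eq_mul, mul_comm (y 0),
        mul_comm (y 1)]⟩
  rw [hpq] at hf
  by_cases h0 : w 0 = 0
  · have h1 : w 1 ≠ 0 := fun h1 => hw (funext fun i => by fin_cases i <;> simp [h0, h1])
    refine ⟨-p / w 1, LinearMap.ext fun y => ?_⟩
    rw [hpq, LinearMap.smul_apply, det2_apply, smul_eq_mul]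
    field_simp
    linear_combination y 1 * hf
  · refine ⟨q / w 0, LinearMap.ext fun y => ?_⟩
    rw [hpq, LinearMap.smul_apply, det2_apply, smul_eq_mul]
    field_simp
    linear_combination y 0 * hf

lemma collinear_of_orient_eq_zero {a b c : ℝ²} (h : orient a b c = 0) :
    Collinear ℝ {a, b, c} := by
  rcases eq_or_ne a b with rfl | hab
  · simpa using collinear_pair ℝ a c
  obtain ⟨t, ht⟩ := exists_eq_smul_of_det2_eq_zero (sub_ne_zero.2 hab.symm) h
  have hc : c ∈ line[ℝ, a, b] := by
    rw [sub_eq_iff_eq_add] at ht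
    rw [ht, ← vadd_eq_add, ← vsub_eq_sub]
    exact AffineMap.lineMap_mem_affineSpan_pair t a b
  have := collinear_insert_of_mem_affineSpan_pair hc
  rwa [Set.insert_comm c a, Set.pair_comm c b] at this

lemma not_collinear_of_forall_notMem_convexHull {E ι : Type*} [AddCommGroup E] [Module ℝ E]
    {v : ι → E} (hv : ∀ i, v i ∉ convexHull ℝ (v '' {j | j ≠ i})) {i j k : ι}
    (hij : i ≠ j) (hik : i ≠ k) (hjk : j ≠ k) : ¬ Collinear ℝ {v i, v j, v k} := by
  have hseg {i j k : ι} (hij : i ≠ j) (hjk : j ≠ k) (h : Wbtw ℝ (v i) (v j) (v k)) : False :=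
    hv j (segment_subset_convexHull (mem_image_of_mem v hij) (mem_image_of_mem v hjk.symm)
      h.mem_segment)
  intro h
  rcases h.wbtw_or_wbtw_or_wbtw with h | h | h
  · exact hseg hij hjk h
  · exact hseg hjk hik.symm h
  · exact hseg hik.symm hij h

lemma interior_convexHull_nonempty_of_not_collinear {s : Set ℝ²} {a b c : ℝ²} (ha : a ∈ s)
    (hb : b ∈ s) (hc : c ∈ s) (h : ¬ Collinear ℝ {a, b, c}) :
    (interior (convexHull ℝ s)).Nonempty := by
  rw [(convex_convexHull ℝ s).interior_nonempty_iff_affineSpan_eq_top, affineSpan_convexHull]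
  have hind : AffineIndependent ℝ ![a, b, c] := affineIndependent_iff_not_collinear_set.2 h
  have htop : affineSpan ℝ (range ![a, b, c]) = ⊤ := by
    rw [hind.affineSpan_eq_top_iff_card_eq_finrank_add_one]
    simp
  refine eq_top_iff.2 (htop ▸ affineSpan_mono ℝ ?_)
  rintro - ⟨i, rfl⟩
  fin_cases i <;> simpa

lemma exists_forall_mul_orient_nonpos {s : Set ℝ²} (hs : Convex ℝ s) (hint : (interior s).Nonempty)
    {a b : ℝ²} (ha : a ∈ s) (hb : b ∈ s) (hab : a ≠ b) (hm : midpoint ℝ a b ∉ interior s) :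
    ∃ μ ≠ 0, ∀ x ∈ s, μ * orient a b x ≤ 0 := by
  obtain ⟨f, c, hf0, hfs, hfm⟩ := geometric_hahn_banach_of_nonempty_interior hs
    (convex_singleton (midpoint ℝ a b)) (Set.disjoint_singleton_right.2 hm) hint
    (Set.singleton_nonempty _)
  have hle : ∀ x ∈ s, f x ≤ f (midpoint ℝ a b) := fun x hx => (hfs x hx).trans (hfm _ rfl)
  have hmid : f (midpoint ℝ a b) = (f a + f b) / 2 := by
    rw [midpoint_eq_smul_add, map_smul, map_add, smul_eq_mul, invOf_eq_inv]; ring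
  have hfab : f a = f b := by linarith [hle a ha, hle b hb]
  obtain ⟨μ, hμ⟩ := eq_smul_det2_of_apply_eq_zero (f := f.toLinearMap) (sub_ne_zero.2 hab.symm)
    (by simp [hfab])
  refine ⟨μ, ?_, fun x hx => ?_⟩
  · rintro rfl
    exact hf0 (ContinuousLinearMap.coe_injective (by simpa using hμ))
  · have : f (x - a) = μ * orient a b x := by
      rw [orient_apply, ← smul_eq_mul, ← LinearMap.smul_apply, ← hμ]; rfl
    rw [← this, map_sub]
    linarith [hle x hx]

section Polygon

variable {ι : Type*} {v : ι → ℝ²}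

lemma orient_mul_orient_pos_of_segment_subset_frontier
    (hv : ∀ i, v i ∉ convexHull ℝ (v '' {j | j ≠ i})) {i j k l : ι} (hij : i ≠ j)
    (hedge : segment ℝ (v i) (v j) ⊆ frontier (convexHull ℝ (range v)))
    (hki : k ≠ i) (hkj : k ≠ j) (hli : l ≠ i) (hlj : l ≠ j) :
    0 < orient (v i) (v j) (v k) * orient (v i) (v j) (v l) := by
  have horient {m : ι} (hmi : m ≠ i) (hmj : m ≠ j) : orient (v i) (v j) (v m) ≠ 0 :=
    fun h => not_collinear_of_forall_notMem_convexHull hv hij hmi.symm hmj.symm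
      (collinear_of_orient_eq_zero h)
  have hmem (m : ι) : v m ∈ convexHull ℝ (range v) := subset_convexHull ℝ _ (mem_range_self m)
  obtain ⟨μ, hμ, hside⟩ := exists_forall_mul_orient_nonpos (convex_convexHull ℝ _)
    (interior_convexHull_nonempty_of_not_collinear (mem_range_self i) (mem_range_self j)
      (mem_range_self k) (not_collinear_of_forall_notMem_convexHull hv hij hki.symm hkj.symm))
    (hmem i) (hmem j) (fun h => hv i (subset_convexHull ℝ _ ⟨j, hij.symm, h.symm⟩))
    (fun h => (hedge (midpoint_mem_segment _ _)).2 h)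
  have hprod : 0 < μ * orient (v i) (v j) (v k) * (μ * orient (v i) (v j) (v l)) :=
    lt_of_le_of_ne (mul_nonneg_of_nonpos_of_nonpos (hside _ (hmem k)) (hside _ (hmem l)))
      (mul_ne_zero (mul_ne_zero hμ (horient hki hkj)) (mul_ne_zero hμ (horient hli hlj))).symm
  rw [mul_mul_mul_comm] at hprod
  exact pos_of_mul_pos_right hprod (mul_self_nonneg μ)

lemma orient_mul_orient_pos_of_adjacent_edges
    (hv : ∀ i, v i ∉ convexHull ℝ (v '' {j | j ≠ i})) {i j k l : ι} (hijkl : [i, j, k, l].Nodup)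
    (hedge₁ : segment ℝ (v i) (v j) ⊆ frontier (convexHull ℝ (range v)))
    (hedge₂ : segment ℝ (v j) (v k) ⊆ frontier (convexHull ℝ (range v))) :
    0 < orient (v i) (v j) (v l) * orient (v j) (v k) (v l) := by
  obtain ⟨⟨hij, hik, hil⟩, ⟨hjk, hjl⟩, hkl⟩ :
      (i ≠ j ∧ i ≠ k ∧ i ≠ l) ∧ (j ≠ k ∧ j ≠ l) ∧ k ≠ l := by
    simpa using hijkl
  have h₁ := orient_mul_orient_pos_of_segment_subset_frontier hv hij hedge₁
    hik.symm hjk.symm hil.symm hjl.symm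
  have h₂ := orient_mul_orient_pos_of_segment_subset_frontier hv hjk hedge₂
    hij hik hjl.symm hkl.symm
  rw [← orient_rotate (v i)] at h₂
  have h := mul_pos h₁ h₂
  rw [mul_mul_mul_comm] at h
  exact pos_of_mul_pos_right h (mul_self_nonneg _)

end Polygon

lemma AffineMap.interior_preimage_Ici_subset {E : Type*} [NormedAddCommGroup E] [NormedSpace ℝ E]
    (f : E →ᵃ[ℝ] ℝ) {x y : E} (hxy : f x ≠ f y) (t : ℝ) :
    interior (f ⁻¹' Ici t) ⊆ f ⁻¹' Ioi t := by
  have hlin : f.linear ≠ 0 := fun h => hxy (by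
    rw [← vsub_eq_zero_iff_eq, ← f.linearMap_vsub, h, LinearMap.zero_apply])
  have hopen : IsOpenMap f :=
    AffineMap.isOpenMap_linear_iff.1 (f.linear.isOpenMap_of_finiteDimensional
      (LinearMap.surjective_of_ne_zero hlin))
  simpa using hopen.interior_preimage_subset_preimage_interior (s := Ici t)

noncomputable def cornerCap (a b c : ℝ²) : ℝ² →ᵃ[ℝ] ℝ :=
  (orient a b c)⁻¹ • orient a b - AffineMap.const ℝ ℝ² 2⁻¹

section cornerCap

variable {a b c : ℝ²}

lemma cornerCap_apply (x : ℝ²) : cornerCap a b c x = orient a b x / orient a b c - 2⁻¹ := by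
  simp [cornerCap, div_eq_inv_mul]

lemma cornerCap_apply_self (h : orient a b c ≠ 0) : cornerCap a b c c = 2⁻¹ := by
  rw [cornerCap_apply, div_self h]; norm_num

lemma cornerCap_apply_left : cornerCap a b c a = -2⁻¹ := by
  rw [cornerCap_apply, orient_apply_left]; ring

lemma cornerCap_apply_right : cornerCap a b c b = -2⁻¹ := by
  rw [cornerCap_apply, orient_apply_right]; ring

lemma cornerCap_le_of_mul_nonpos {x : ℝ²} (h : orient a b x * orient a b c ≤ 0) :
    cornerCap a b c x ≤ -2⁻¹ := by
  rw [cornerCap_apply]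
  linarith [div_nonpos_iff.2 (mul_nonpos_iff.1 h)]

lemma interior_convexHull_corner_subset (h : orient a b c ≠ 0) :
    interior (convexHull ℝ {midpoint ℝ a c, c, midpoint ℝ b c}) ⊆ {x | 0 < cornerCap a b c x} := by
  have hmid (p : ℝ²) (hp : cornerCap a b c p = -2⁻¹) : cornerCap a b c (midpoint ℝ p c) = 0 := by
    rw [AffineMap.map_midpoint, hp, cornerCap_apply_self h, midpoint_eq_smul_add]; norm_num
  refine (interior_mono (convexHull_min ?_ ((convex_Ici 0).affine_preimage _))).trans
    ((cornerCap a b c).interior_preimage_Ici_subset (x := c) (y := a) ?_ 0)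
  · rintro x (rfl | rfl | rfl)
    · simp [hmid a cornerCap_apply_left]
    · simp [cornerCap_apply_self h]
    · simp [hmid b cornerCap_apply_right]
  · rw [cornerCap_apply_self h, cornerCap_apply_left]; norm_num

end cornerCap

lemma exists_pos_of_mem_convexHull {E : Type*} [AddCommGroup E] [Module ℝ E] (f : E →ᵃ[ℝ] ℝ)
    {s : Set E} {x : E} (hx : x ∈ convexHull ℝ s) (hfx : 0 < f x) : ∃ y ∈ s, 0 < f y := by
  by_contra! h
  have hfx' : f x ≤ 0 := convexHull_min h ((convex_Iic 0).affine_preimage f) hx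
  exact hfx'.not_gt hfx

lemma exists_forall_convexHull_nonpos_of_card_lt {E ι κ : Type*} [AddCommGroup E] [Module ℝ E]
    [Fintype ι] [Fintype κ] (hcard : Fintype.card κ < Fintype.card ι) (f : ι → E →ᵃ[ℝ] ℝ)
    {s : Set E} (hdisj : ∀ x ∈ s, ∀ i j, 0 < f i x → 0 < f j x → i = j) {u : κ → E}
    (hu : ∀ a, u a ∈ s) : ∃ i, ∀ x ∈ convexHull ℝ (range u), f i x ≤ 0 := by
  by_contra! h
  choose x hx hfx using h
  choose b hb using fun i => exists_range_iff.1 (exists_pos_of_mem_convexHull (f i) (hx i) (hfx i))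
  obtain ⟨i, j, hij, hbij⟩ := Fintype.exists_ne_map_eq_of_card_lt b hcard
  exact hij (hdisj (u (b i)) (hu _) i j (hb i) (hbij ▸ hb j))

section Pentagon

variable {v : Fin 5 → ℝ²}

lemma orient_diagonal_mul_orient_nonpos (hv : ∀ i, v i ∉ convexHull ℝ (v '' {j | j ≠ i}))
    (hcyc : ∀ i, segment ℝ (v i) (v (i + 1)) ⊆ frontier (convexHull ℝ (range v)))
    {i k : Fin 5} (hki : k ≠ i) :
    orient (v (i - 1)) (v (i + 1)) (v k) * orient (v (i - 1)) (v (i + 1)) (v i) ≤ 0 := by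
  obtain rfl | rfl | rfl | rfl : k = i - 1 ∨ k = i + 1 ∨ k = i + 2 ∨ k = i - 2 := by
    revert i k; decide
  · rw [orient_apply_left, zero_mul]
  · rw [orient_apply_right, zero_mul]
  · have h := orient_mul_orient_pos_of_adjacent_edges hv (l := i - 1)
      ((by decide : ∀ i : Fin 5, [i, i + 1, i + 2, i - 1].Nodup) i) (hcyc i)
      (by simpa only [(by decide : ∀ i : Fin 5, i + 1 + 1 = i + 2) i] using hcyc (i + 1))
    rw [← orient_rotate, orient_swap, ← orient_rotate (v (i - 1))] at h
    linarith
  · have h := orient_mul_orient_pos_of_adjacent_edges hv (l := i + 1)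
      ((by decide : ∀ i : Fin 5, [i - 2, i - 1, i, i + 1].Nodup) i)
      (by simpa only [(by decide : ∀ i : Fin 5, i - 2 + 1 = i - 1) i] using hcyc (i - 2))
      (by simpa using hcyc (i - 1))
    rw [orient_rotate, orient_swap (v (i - 1)) (v (i + 1))] at h
    linarith

lemma orient_diagonal_ne_zero (hv : ∀ i, v i ∉ convexHull ℝ (v '' {j | j ≠ i})) (i : Fin 5) :
    orient (v (i - 1)) (v (i + 1)) (v i) ≠ 0 := fun h =>
  not_collinear_of_forall_notMem_convexHull hv ((by decide : ∀ i : Fin 5, i - 1 ≠ i + 1) i)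
    ((by decide : ∀ i : Fin 5, i - 1 ≠ i) i) ((by decide : ∀ i : Fin 5, i + 1 ≠ i) i)
    (collinear_of_orient_eq_zero h)

lemma cornerCap_add_cornerCap_nonpos (hv : ∀ i, v i ∉ convexHull ℝ (v '' {j | j ≠ i}))
    (hcyc : ∀ i, segment ℝ (v i) (v (i + 1)) ⊆ frontier (convexHull ℝ (range v)))
    {i j : Fin 5} (hij : i ≠ j) {x : ℝ²} (hx : x ∈ convexHull ℝ (range v)) :
    cornerCap (v (i - 1)) (v (i + 1)) (v i) x + cornerCap (v (j - 1)) (v (j + 1)) (v j) x ≤ 0 := by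
  have hle {i k : Fin 5} (hki : k ≠ i) : cornerCap (v (i - 1)) (v (i + 1)) (v i) (v k) ≤ -2⁻¹ :=
    cornerCap_le_of_mul_nonpos (orient_diagonal_mul_orient_nonpos hv hcyc hki)
  have hself (i : Fin 5) : cornerCap (v (i - 1)) (v (i + 1)) (v i) (v i) = 2⁻¹ :=
    cornerCap_apply_self (orient_diagonal_ne_zero hv i)
  refine convexHull_min ?_ ((convex_Iic 0).affine_preimage
    (cornerCap (v (i - 1)) (v (i + 1)) (v i) + cornerCap (v (j - 1)) (v (j + 1)) (v j))) hx
  rintro - ⟨k, rfl⟩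
  simp only [mem_preimage, AffineMap.coe_add, Pi.add_apply, mem_Iic]
  by_cases hki : k = i
  · subst hki; linarith [hself k, hle hij]
  by_cases hkj : k = j
  · subst hkj; linarith [hself k, hle hki]
  linarith [hle hki, hle hkj]

end Pentagon

/-- No quadrilateral inscribed in a convex pentagon intersects the interiors of
all five corner triangles `T i = conv {(v (i−1) + v i)/2, v i, (v (i+1) + v i)/2}`
of the pentagon. -/
theorem stmt_11 (v : Fin 5 → (Fin 2 → ℝ))
    (hconvpos : ∀ i : Fin 5, v i ∉ convexHull ℝ (v '' {j | j ≠ i}))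
    (hcyc : ∀ i : Fin 5,
      segment ℝ (v i) (v (i + 1)) ⊆ frontier (convexHull ℝ (Set.range v)))
    (T : Fin 5 → Set (Fin 2 → ℝ))
    (hT : ∀ i, T i = convexHull ℝ
      {midpoint ℝ (v (i - 1)) (v i), v i, midpoint ℝ (v (i + 1)) (v i)}) :
    ¬ ∃ u : Fin 4 → (Fin 2 → ℝ),
      (∀ a, u a ∈ convexHull ℝ (Set.range v)) ∧
      (∀ i : Fin 5, (convexHull ℝ (Set.range u) ∩ interior (T i)).Nonempty) := by
  rintro ⟨u, hu, hmeet⟩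
  obtain ⟨i, hi⟩ := exists_forall_convexHull_nonpos_of_card_lt (by simp)
    (fun i => cornerCap (v (i - 1)) (v (i + 1)) (v i))
    (fun x hx i j hi hj => by_contra fun hij =>
      (cornerCap_add_cornerCap_nonpos hconvpos hcyc hij hx).not_gt (add_pos hi hj)) hu
  obtain ⟨x, hxu, hxT⟩ := hmeet i
  rw [hT] at hxT
  exact (hi x hxu).not_gt
    (interior_convexHull_corner_subset (orient_diagonal_ne_zero hconvpos i) hxT)
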